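/- arXiv:2411.09910 — 4 statements merged into one kernel-verified Lean document; each statement's English description precedes it below -/
import Mathlib

section
/- For all integers k ≥ 1 and positive integers n, n · Σ_{d ∣ n} σ_{−1}(n/d) · J_k(d) = σ_{k+1}(n), where σ_s(m) = Σ_{e ∣ m} e^s and J_k(d) = d^k ∏_{p ∣ d} (1 − p^{−k}) is Jacobi's totient function. -/
/-!
Multiplying an arithmetic function pointwise by the identity `N` distributes over Dirichlet
convolution, because `N` is completely multiplicative. Since `N · σ_{-1} = σ₁`, the left-hand side
is `(N · J_k) * σ₁` evaluated at `n`. With `J_k = μ * N^k` and `σ_s = ζ * N^s` this is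
`(N · μ) * N^{k+1} * ζ * N`, and `(N · μ) * N = N · (μ * ζ) = 1` leaves `ζ * N^{k+1} = σ_{k+1}`.
-/

open Finset ArithmeticFunction
open scoped ArithmeticFunction.Moebius ArithmeticFunction.sigma ArithmeticFunction.zeta

namespace ArithmeticFunction

variable {R K : Type*}

theorem IsMultiplicative.prod_primeFactors_one_sub [CommRing R] {f : ArithmeticFunction R}
    (hf : f.IsMultiplicative) {n : ℕ} (hn : n ≠ 0) :
    ∏ p ∈ n.primeFactors, (1 - f p) = ∑ d ∈ n.divisors, μ d * f d := by
  have key : ArithmeticFunction.prodPrimeFactors (fun p ↦ 1 - f p) =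
      (μ : ArithmeticFunction R).pmul f * (ζ : ArithmeticFunction R) := by
    refine (eq_iff_eq_on_prime_powers _ (.prodPrimeFactors _) _
      ((isMultiplicative_moebius.intCast.pmul hf).mul isMultiplicative_zeta.natCast)).2
      fun p i hp ↦ ?_
    rw [prodPrimeFactors_apply (pow_ne_zero _ hp.ne_zero), coe_mul_zeta_apply,
      Nat.sum_divisors_prime_pow hp]
    cases i with
    | zero => simp [hf.map_one]
    | succ i =>
      simp [Nat.primeFactors_prime_pow, sum_range_succ', moebius_apply_prime_pow, hp, hf.map_one]
      ring
  rw [← prodPrimeFactors_apply hn, key, coe_mul_zeta_apply]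
  simp only [pmul_apply, intCoe_apply]

theorem mul_pmul_of_map_mul [CommSemiring R] {h : ArithmeticFunction R}
    (hh : ∀ a b, h (a * b) = h a * h b) (f g : ArithmeticFunction R) :
    (f * g).pmul h = f.pmul h * g.pmul h := by
  ext n
  simp only [pmul_apply, mul_apply, sum_mul]
  refine sum_congr rfl fun x hx ↦ ?_
  rw [← (Nat.mem_divisorsAntidiagonal.mp hx).1, hh]
  ring

theorem natCoe_pow_one_map_mul [Semiring R] (a b : ℕ) :
    (pow 1 : ArithmeticFunction R) (a * b) = pow 1 a * pow 1 b := by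
  simp

theorem natCoe_pow_pmul_pow_one [Semiring R] (k : ℕ) :
    (pow k : ArithmeticFunction R).pmul ↑(pow 1) = ↑(pow (k + 1)) := by
  ext n
  rcases eq_or_ne n 0 with rfl | hn <;> simp [*, pow_succ]

theorem moebius_pmul_pow_one_mul_pow_one [CommRing R] :
    (μ : ArithmeticFunction R).pmul ↑(pow 1) * ↑(pow 1) = 1 := by
  conv_lhs => rhs; rw [← zeta_pmul (pow 1 : ArithmeticFunction R)]
  rw [← mul_pmul_of_map_mul natCoe_pow_one_map_mul, coe_moebius_mul_coe_zeta]
  ext n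
  rw [pmul_apply, one_apply]
  split_ifs with hn <;> simp [hn]

def jacobiTotient [Ring R] (k : ℕ) : ArithmeticFunction R :=
  μ * pow k

theorem jacobiTotient_pmul_pow_one_mul_sigma_one [CommRing R] (k : ℕ) :
    (jacobiTotient k : ArithmeticFunction R).pmul ↑(pow 1) * ↑(σ 1) = ↑(σ (k + 1)) := by
  calc (jacobiTotient k : ArithmeticFunction R).pmul ↑(pow 1) * ↑(σ 1)
      = ((μ : ArithmeticFunction R).pmul ↑(pow 1) * ↑(pow 1)) * (ζ * ↑(pow (k + 1))) := by
        rw [jacobiTotient, mul_pmul_of_map_mul natCoe_pow_one_map_mul, natCoe_pow_pmul_pow_one,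
          ← zeta_mul_pow_eq_sigma, natCoe_mul]
        ring
    _ = ↑(σ (k + 1)) := by
        rw [moebius_pmul_pow_one_mul_pow_one, one_mul, ← natCoe_mul, zeta_mul_pow_eq_sigma]

theorem natCast_mul_sum_divisors_inv [DivisionSemiring K] [CharZero K] (n : ℕ) :
    (n : K) * ∑ e ∈ n.divisors, (e : K)⁻¹ = σ 1 n := by
  conv_rhs => rw [sigma_one_apply, ← Nat.sum_div_divisors]
  rw [Nat.cast_sum, mul_sum]
  refine sum_congr rfl fun e he ↦ ?_
  rw [Nat.cast_div (Nat.dvd_of_mem_divisors he)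
    (Nat.cast_ne_zero.2 (Nat.pos_of_mem_divisors he).ne'), div_eq_mul_inv]

section Field

variable [Field K] [CharZero K]

def natInv : ArithmeticFunction K :=
  ⟨fun n ↦ (n : K)⁻¹, by simp⟩

theorem isMultiplicative_natInv : (natInv : ArithmeticFunction K).IsMultiplicative :=
  ⟨by simp [natInv], fun _ ↦ by simp [natInv, mul_comm]⟩

theorem natInv_ppow_apply (k : ℕ) {n : ℕ} (hn : n ≠ 0) :
    (natInv : ArithmeticFunction K).ppow k n = (n : K)⁻¹ ^ k := by
  rcases k.eq_zero_or_pos with rfl | hk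
  · simp [hn]
  · rw [ppow_apply hk]; rfl

theorem jacobiTotient_apply (k : ℕ) {d : ℕ} (hd : d ≠ 0) :
    (jacobiTotient k : ArithmeticFunction K) d =
      d ^ k * ∏ p ∈ d.primeFactors, (1 - (p : K)⁻¹ ^ k) := by
  have hprod : ∏ p ∈ d.primeFactors, (1 - (p : K)⁻¹ ^ k) =
      ∏ p ∈ d.primeFactors, (1 - (natInv : ArithmeticFunction K).ppow k p) :=
    prod_congr rfl fun p hp ↦ by
      rw [natInv_ppow_apply k (Nat.prime_of_mem_primeFactors hp).ne_zero]
  rw [hprod, isMultiplicative_natInv.ppow.prod_primeFactors_one_sub hd, jacobiTotient, mul_apply,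
    Nat.sum_divisorsAntidiagonal (fun a b ↦
      (μ : ArithmeticFunction K) a * (pow k : ArithmeticFunction K) b), mul_sum]
  refine sum_congr rfl fun c hc ↦ ?_
  have hdvd : c ∣ d := Nat.dvd_of_mem_divisors hc
  have hc0 : c ≠ 0 := ne_zero_of_dvd_ne_zero hd hdvd
  have hdc : d / c ≠ 0 := (Nat.div_pos (Nat.le_of_dvd (Nat.pos_of_ne_zero hd) hdvd)
    (Nat.pos_of_ne_zero hc0)).ne'
  rw [natInv_ppow_apply k hc0, natCoe_apply, intCoe_apply, pow_apply, if_neg (by simp [hdc]),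
    Nat.cast_pow, Nat.cast_div hdvd (Nat.cast_ne_zero.2 hc0), div_pow, inv_pow]
  ring

end Field

end ArithmeticFunction

theorem mul_sigma_neg_one_conv_jacobi_general (k : ℕ) (n : ℕ) :
    (n : ℚ) * ∑ d ∈ n.divisors,
        (∑ e ∈ (n / d).divisors, ((e : ℚ))⁻¹) *
          ((d : ℚ) ^ k * ∏ p ∈ d.primeFactors, (1 - ((p : ℚ))⁻¹ ^ k)) =
      ∑ e ∈ n.divisors, (e : ℚ) ^ (k + 1) := by
  have summand : ∀ d ∈ n.divisors,
      (n : ℚ) * ((∑ e ∈ (n / d).divisors, ((e : ℚ))⁻¹) *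
          ((d : ℚ) ^ k * ∏ p ∈ d.primeFactors, (1 - ((p : ℚ))⁻¹ ^ k))) =
        (jacobiTotient k : ArithmeticFunction ℚ).pmul ↑(pow 1) d *
          (σ 1 : ArithmeticFunction ℚ) (n / d) := by
    intro d hd
    rw [← jacobiTotient_apply k (Nat.pos_of_mem_divisors hd).ne', natCoe_apply,
      ← natCast_mul_sum_divisors_inv, pmul_apply, natCoe_apply, pow_apply, if_neg (by simp)]
    nth_rw 1 [← Nat.mul_div_cancel' (Nat.dvd_of_mem_divisors hd)]
    push_cast
    ring
  rw [mul_sum, sum_congr rfl summand, ← Nat.sum_divisorsAntidiagonal (fun a b ↦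
      (jacobiTotient k : ArithmeticFunction ℚ).pmul ↑(pow 1) a * (σ 1 : ArithmeticFunction ℚ) b),
    ← mul_apply, jacobiTotient_pmul_pow_one_mul_sigma_one, natCoe_apply, sigma_apply]
  norm_cast

/-- `n · (σ_{-1} * J_k)(n) = σ_{k+1}(n)` where `J_k` is Jacobi's totient function. -/
theorem mul_sigma_neg_one_conv_jacobi (k : ℕ) (hk : 1 ≤ k) (n : ℕ) (hn : 0 < n) :
    (n : ℚ) * ∑ d ∈ n.divisors,
        (∑ e ∈ (n / d).divisors, ((e : ℚ))⁻¹) *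
          ((d : ℚ) ^ k * ∏ p ∈ d.primeFactors, (1 - ((p : ℚ))⁻¹ ^ k)) =
      ∑ e ∈ n.divisors, (e : ℚ) ^ (k + 1) :=
  mul_sigma_neg_one_conv_jacobi_general k n
end

section
/- Let G be a group with a descending chain of normal subgroups of finite index G = N_0 ⊇ N_1 ⊇ ⋯ ⊇ N_m, and let H ≤ G be a subgroup with N_m ≤ H. Then the index of H in G is finite and [G : H] = ∏_{i=1}^{m} |im(N_{i−1} → G/N_i)| / |im(H ∩ N_{i−1} → G/N_i)|, where the maps are induced by the quotient projections G → G/N_i. -/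
/-!
The image of `K` in `G ⧸ N` is `K ⧸ (K ⊓ N)`, so its order is `N.relIndex K`. Because the
`N i` decrease, `(N i).relIndex (H ⊓ N (i - 1)) = (H ⊓ N i).relIndex (H ⊓ N (i - 1))`, and the
product telescopes along the chain `H ⊓ N i` to `(N m).relIndex H`; taking `H = ⊤` gives
`(N m).index` for the numerators. Then `[G : H] = [G : N m] / [H : N m]`.
-/

open Finset

theorem QuotientGroup.card_map_mk' {G : Type*} [Group G] (N K : Subgroup G) [N.Normal] :
    Nat.card (K.map (QuotientGroup.mk' N)) = N.relIndex K := by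
  rw [← Subgroup.relIndex_bot_left, ← Subgroup.relIndex_comap,
    (QuotientGroup.mk' N).comap_bot, QuotientGroup.ker_mk']

theorem apply_le_apply_zero_of_succ_le {α : Type*} [Preorder α] {f : ℕ → α} {m : ℕ}
    (hf : ∀ i < m, f (i + 1) ≤ f i) {j : ℕ} (hj : j ≤ m) : f j ≤ f 0 := by
  induction j with
  | zero => exact le_rfl
  | succ j ih => exact (hf j hj).trans (ih (by omega))

namespace Subgroup

variable {G : Type*} [Group G]

theorem relIndex_inf_eq_of_le (H : Subgroup G) {N M : Subgroup G} (hNM : N ≤ M) :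
    (H ⊓ N).relIndex (H ⊓ M) = N.relIndex (H ⊓ M) := by
  rw [← inf_relIndex_right N (H ⊓ M), inf_left_comm, inf_of_le_left hNM]

theorem prod_Icc_relIndex_of_succ_le (K : ℕ → Subgroup G) {m : ℕ}
    (hK : ∀ i < m, K (i + 1) ≤ K i) :
    ∏ i ∈ Icc 1 m, (K i).relIndex (K (i - 1)) = (K m).relIndex (K 0) := by
  induction m with
  | zero => simp
  | succ m ih =>
    rw [prod_Icc_succ_top (by omega), ih fun i hi => hK i (by omega), Nat.add_sub_cancel,
      mul_comm]
    exact relIndex_mul_relIndex _ _ _ (hK m (by omega))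
      (apply_le_apply_zero_of_succ_le hK (by omega))

theorem prod_Icc_relIndex_inf_of_succ_le (H : Subgroup G) (N : ℕ → Subgroup G) {m : ℕ}
    (hN : ∀ i < m, N (i + 1) ≤ N i) :
    ∏ i ∈ Icc 1 m, (N i).relIndex (H ⊓ N (i - 1)) = (N m).relIndex (H ⊓ N 0) := by
  have hfactor : ∀ i ∈ Icc 1 m,
      (N i).relIndex (H ⊓ N (i - 1)) = (H ⊓ N i).relIndex (H ⊓ N (i - 1)) := by
    intro i hi
    obtain ⟨hi1, him⟩ := mem_Icc.1 hi
    have hstep := hN (i - 1) (by omega)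
    rw [Nat.sub_add_cancel hi1] at hstep
    exact (relIndex_inf_eq_of_le H hstep).symm
  rw [prod_congr rfl hfactor,
    prod_Icc_relIndex_of_succ_le (H ⊓ N ·) fun i hi => inf_le_inf_left H (hN i hi),
    relIndex_inf_eq_of_le H (apply_le_apply_zero_of_succ_le hN le_rfl)]

end Subgroup

/-- Index formula via a chain of normal subgroups: if `G = N_0 ⊇ N_1 ⊇ ⋯ ⊇ N_m` are normal
of finite index and `N_m ≤ H`, then `[G : H]` is finite and equals
`∏_{i=1}^{m} |im(N_{i-1} → G/N_i)| / |im(H ∩ N_{i-1} → G/N_i)|`. -/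
theorem index_eq_prod_of_chain (G : Type*) [Group G] (m : ℕ) (N : ℕ → Subgroup G)
    (hNorm : ∀ i, (N i).Normal) (hfin : ∀ i ≤ m, (N i).FiniteIndex)
    (h0 : N 0 = ⊤) (hchain : ∀ i, i < m → N (i + 1) ≤ N i)
    (H : Subgroup G) (hH : N m ≤ H) :
    H.index ≠ 0 ∧
      (H.index : ℚ) =
        ∏ i ∈ Icc 1 m,
          ((Nat.card (Subgroup.map (@QuotientGroup.mk' G _ (N i) (hNorm i)) (N (i - 1))) : ℚ) /
            (Nat.card (Subgroup.map (@QuotientGroup.mk' G _ (N i) (hNorm i)) (H ⊓ N (i - 1))) : ℚ)) := by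
  have hNm : (N m).index ≠ 0 := (hfin m le_rfl).index_ne_zero
  have hsplit : (N m).relIndex H * H.index = (N m).index := Subgroup.relIndex_mul_index hH
  have hrel : (N m).relIndex H ≠ 0 := left_ne_zero_of_mul (hsplit ▸ hNm)
  have hG := Subgroup.prod_Icc_relIndex_inf_of_succ_le ⊤ N hchain
  have hHN := Subgroup.prod_Icc_relIndex_inf_of_succ_le H N hchain
  simp only [top_inf_eq, h0, Subgroup.relIndex_top_right, inf_top_eq] at hG hHN
  refine ⟨right_ne_zero_of_mul (hsplit ▸ hNm), ?_⟩
  have := hNorm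
  simp only [QuotientGroup.card_map_mk', prod_div_distrib]
  rw [← Nat.cast_prod, ← Nat.cast_prod, hG, hHN, eq_div_iff (mod_cast hrel), mul_comm]
  exact_mod_cast hsplit
end

section
/- For every positive integer n, the number of subgroups of ℤ × ℤ of index n equals σ_1(n) = Σ_{d ∣ n} d. -/
/-!
A subgroup `H` of finite index in `ℤ × ℤ` is determined by its Hermite normal form: if `a ℤ` is
the projection of `H` to the first factor and `d ℤ = H ∩ (0 × ℤ)`, then `H` is generated by
`(0, d)` and a unique `(a, b)` with `0 ≤ b < d`, and `[ℤ × ℤ : H] = a d`. So the subgroups of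
index `n` correspond to the pairs `(a d = n, b mod d)`, of which there are `∑_{d ∣ n} d`.
-/

theorem AddSubgroup.index_eq_index_map_fst_mul_index_comap_inr {A B : Type*} [AddCommGroup A]
    [AddCommGroup B] (H : AddSubgroup (A × B)) :
    H.index = (H.map (AddMonoidHom.fst A B)).index * (H.comap (AddMonoidHom.inr A B)).index := by
  have hker : (AddMonoidHom.fst A B).ker = (AddMonoidHom.inr A B).range := by
    ext ⟨x, y⟩
    simp [AddSubgroup.mem_prod, eq_comm]
  rw [index_map, (AddMonoidHom.fst A B).range_eq_top_of_surjective Prod.fst_surjective, index_top,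
    mul_one, index_comap, ← hker, ← relIndex_sup_left, ← relIndex_mul_index le_sup_left, mul_comm]

theorem AddSubgroup.eq_of_le_of_index_eq {G : Type*} [AddGroup G] {H K : AddSubgroup G}
    (hle : H ≤ K) (hindex : H.index = K.index) (hK : K.index ≠ 0) : H = K := by
  have hrel := relIndex_mul_index hle
  rw [hindex, mul_eq_right₀ hK] at hrel
  exact le_antisymm hle (relIndex_eq_one.1 hrel)

theorem Int.eq_zmultiples_index (K : AddSubgroup ℤ) :
    K = AddSubgroup.zmultiples (K.index : ℤ) := by
  obtain ⟨a, rfl⟩ := Int.subgroup_cyclic K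
  rw [← AddSubgroup.zmultiples_eq_closure, Int.index_zmultiples, Int.zmultiples_natAbs]

def hermiteSubgroup (a b d : ℤ) : AddSubgroup (ℤ × ℤ) :=
  AddSubgroup.zmultiples (a, b) ⊔ AddSubgroup.zmultiples (0, d)

section HermiteSubgroup

variable {a b d : ℤ}

theorem mem_hermiteSubgroup {p : ℤ × ℤ} :
    p ∈ hermiteSubgroup a b d ↔ ∃ s t : ℤ, s • (a, b) + t • (0, d) = p := by
  simp [hermiteSubgroup, AddSubgroup.mem_sup, AddSubgroup.mem_zmultiples_iff]

theorem map_fst_hermiteSubgroup :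
    (hermiteSubgroup a b d).map (AddMonoidHom.fst ℤ ℤ) = AddSubgroup.zmultiples a := by
  simp [hermiteSubgroup, AddSubgroup.map_sup, AddMonoidHom.map_zmultiples]

theorem comap_inr_hermiteSubgroup (ha : a ≠ 0) :
    (hermiteSubgroup a b d).comap (AddMonoidHom.inr ℤ ℤ) = AddSubgroup.zmultiples d := by
  ext y
  simp [mem_hermiteSubgroup, AddSubgroup.mem_zmultiples_iff, ha]

theorem index_hermiteSubgroup (ha : a ≠ 0) :
    (hermiteSubgroup a b d).index = a.natAbs * d.natAbs := by
  rw [AddSubgroup.index_eq_index_map_fst_mul_index_comap_inr, map_fst_hermiteSubgroup,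
    comap_inr_hermiteSubgroup ha, Int.index_zmultiples, Int.index_zmultiples]

theorem modEq_of_hermiteSubgroup_eq {b' : ℤ} (ha : a ≠ 0)
    (h : hermiteSubgroup a b d = hermiteSubgroup a b' d) : b ≡ b' [ZMOD d] := by
  have hmem : (a, b) ∈ hermiteSubgroup a b' d := h ▸ mem_hermiteSubgroup.2 ⟨1, 0, by simp⟩
  obtain ⟨s, t, hst⟩ := mem_hermiteSubgroup.1 hmem
  simp only [Prod.smul_mk, smul_eq_mul, Prod.mk_add_mk, Prod.mk.injEq] at hst
  obtain rfl : s = 1 := by simpa [ha] using hst.1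
  exact (Int.modEq_iff_add_fac.2 ⟨t, by linarith [hst.2]⟩).symm

end HermiteSubgroup

theorem hermiteSubgroup_inj {a a' b b' d d' : ℕ} (ha : a ≠ 0) (hb : b < d) (hb' : b' < d')
    (h : hermiteSubgroup a b d = hermiteSubgroup a' b' d') : a = a' ∧ d = d' ∧ b = b' := by
  obtain rfl : a = a' := by
    simpa [map_fst_hermiteSubgroup] using
      congrArg (fun H ↦ (H.map (AddMonoidHom.fst ℤ ℤ)).index) h
  obtain rfl : d = d' := by
    simpa [comap_inr_hermiteSubgroup, ha] using
      congrArg (fun H ↦ (H.comap (AddMonoidHom.inr ℤ ℤ)).index) h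
  exact ⟨rfl, rfl, Nat.ModEq.eq_of_lt_of_lt
    (Int.natCast_modEq_iff.1 (modEq_of_hermiteSubgroup_eq (by exact_mod_cast ha) h)) hb hb'⟩

theorem exists_hermiteSubgroup_eq (H : AddSubgroup (ℤ × ℤ)) (hH : H.index ≠ 0) :
    ∃ a d : ℕ, ∃ b : Fin d, a * d = H.index ∧ hermiteSubgroup a b d = H := by
  set a := (H.map (AddMonoidHom.fst ℤ ℤ)).index
  set d := (H.comap (AddMonoidHom.inr ℤ ℤ)).index
  have hindex : a * d = H.index := H.index_eq_index_map_fst_mul_index_comap_inr.symm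
  have ha : a ≠ 0 := left_ne_zero_of_mul (hindex ▸ hH)
  have hd : (0 : ℤ) < d := by have := right_ne_zero_of_mul (hindex ▸ hH); omega
  obtain ⟨⟨x, y⟩, hxy, rfl : x = a⟩ : (a : ℤ) ∈ H.map (AddMonoidHom.fst ℤ ℤ) := by
    rw [Int.eq_zmultiples_index (H.map _)]
    exact AddSubgroup.mem_zmultiples _
  have hd_mem : ((0 : ℤ), (d : ℤ)) ∈ H := by
    change (d : ℤ) ∈ H.comap (AddMonoidHom.inr ℤ ℤ)
    rw [Int.eq_zmultiples_index (H.comap _)]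
    exact AddSubgroup.mem_zmultiples _
  have hb_mem : ((a : ℤ), y % d) ∈ H := by
    have : ((a : ℤ), y % d) = ((a : ℤ), y) - (y / d) • ((0 : ℤ), (d : ℤ)) := by
      simp [Int.emod_def, mul_comm]
    rw [this]
    exact H.sub_mem hxy (H.zsmul_mem hd_mem _)
  have hb_lt := Int.emod_lt_of_pos y hd
  refine ⟨a, d, ⟨(y % d).toNat, by omega⟩, hindex, ?_⟩
  have hb : (((y % d).toNat : ℕ) : ℤ) = y % d := Int.toNat_of_nonneg (Int.emod_nonneg _ hd.ne')
  refine AddSubgroup.eq_of_le_of_index_eq ?_ ?_ hH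
  · rw [hermiteSubgroup, hb, sup_le_iff, AddSubgroup.zmultiples_le, AddSubgroup.zmultiples_le]
    exact ⟨hb_mem, hd_mem⟩
  · rw [index_hermiteSubgroup (by exact_mod_cast ha), Int.natAbs_natCast, Int.natAbs_natCast,
      hindex]

/-- The number of index-`n` subgroups of `ℤ × ℤ` is `σ₁(n)`. -/
theorem card_index_n_subgroups_int_sq (n : ℕ) (hn : 0 < n) :
    Nat.card {H : AddSubgroup (ℤ × ℤ) // H.index = n} = ∑ d ∈ n.divisors, d := by
  let F : (Σ ad : n.divisorsAntidiagonal, Fin (ad : ℕ × ℕ).2) →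
      {H : AddSubgroup (ℤ × ℤ) // H.index = n} := fun ⟨⟨(a, d), had⟩, b⟩ =>
    ⟨hermiteSubgroup a b d, by
      rw [index_hermiteSubgroup (mod_cast Nat.left_ne_zero_of_mem_divisorsAntidiagonal had),
        Int.natAbs_natCast, Int.natAbs_natCast, (Nat.mem_divisorsAntidiagonal.1 had).1]⟩
  have hF : Function.Bijective F := by
    constructor
    · rintro ⟨⟨⟨a, d⟩, had⟩, b⟩ ⟨⟨⟨a', d'⟩, had'⟩, b'⟩ h
      obtain ⟨rfl, rfl, hb⟩ := hermiteSubgroup_inj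
        (Nat.left_ne_zero_of_mem_divisorsAntidiagonal had) b.2 b'.2 (congrArg Subtype.val h)
      rw [Fin.ext hb]
    · rintro ⟨H, rfl⟩
      obtain ⟨a, d, b, had, rfl⟩ := exists_hermiteSubgroup_eq H hn.ne'
      exact ⟨⟨⟨(a, d), Nat.mem_divisorsAntidiagonal.2 ⟨had, hn.ne'⟩⟩, b⟩, rfl⟩
  rw [← Nat.card_eq_of_bijective F hF, Nat.card_sigma]
  simp only [Nat.card_eq_fintype_card, Fintype.card_fin]
  rw [Finset.sum_coe_sort n.divisorsAntidiagonal (fun ad ↦ ad.2)]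
  exact Nat.sum_divisorsAntidiagonal' (f := fun _ d ↦ d)
end

section
/- Let δ = diag(d_1, …, d_g) be a diagonal integer matrix with positive diagonal entries and let D = (δ, 0; 0, I_g) and D' = (I_g, 0; 0, δ) be the corresponding 2g × 2g block-diagonal matrices. Then the set of matrices M ∈ Sp_{2g}(ℤ) of the form M = I_{2g} + D·N·D' for some integer matrix N ∈ M_{2g}(ℤ) is a subgroup of Sp_{2g}(ℤ). -/
/-!
The matrices `1 + D * N * D'` are closed under products, since
`(1 + D A D') (1 + D B D') = 1 + D (A + B + A D' D B) D'`, with no condition on `D, D'`.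
A symplectic `M` has `M⁻¹ = -J Mᵀ J`; when `D, D'` are symmetric and `D J = J D'` (as for
`D = diag(δ, 1)`, `D' = diag(1, δ)`), the factors `D, D'` can be moved through `J`, giving
`(1 + D A D')⁻¹ = 1 + D (-(J Aᵀ J)) D'`.
-/

open Matrix

section Ring

variable {α : Type*} [Ring α]

theorem one_add_mul_mul_mul_one_add_mul_mul (D D' A B : α) :
    (1 + D * A * D') * (1 + D * B * D') = 1 + D * (A + B + A * D' * D * B) * D' := by
  noncomm_ring

end Ring

namespace Matrix

variable {l R : Type*} [DecidableEq l] [Fintype l] [CommRing R]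

theorem fromBlocks_one_mul_J (δ : Matrix l l R) :
    fromBlocks δ 0 0 1 * J l R = J l R * fromBlocks 1 0 0 δ := by
  simp [J, fromBlocks_multiply]

theorem neg_J_mul_transpose_one_add_mul_mul_mul_J {D D' : Matrix (l ⊕ l) (l ⊕ l) R}
    (hD : Dᵀ = D) (hD' : D'ᵀ = D') (hDJ : D * J l R = J l R * D') (A : Matrix (l ⊕ l) (l ⊕ l) R) :
    -J l R * (1 + D * A * D')ᵀ * J l R = 1 + D * -(J l R * Aᵀ * J l R) * D' := by
  rw [transpose_add, transpose_one, transpose_mul, transpose_mul, hD, hD']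
  calc _ = -(J l R * J l R) - (J l R * D') * Aᵀ * (D * J l R) := by noncomm_ring
    _ = 1 - (D * J l R) * Aᵀ * (J l R * D') := by rw [J_squared, hDJ]; noncomm_ring
    _ = 1 + D * -(J l R * Aᵀ * J l R) * D' := by noncomm_ring

end Matrix

namespace SymplecticGroup

variable {l R : Type*} [DecidableEq l] [Fintype l] [CommRing R]

def oneAddMulMulSubgroup {D D' : Matrix (l ⊕ l) (l ⊕ l) R}
    (hD : Dᵀ = D) (hD' : D'ᵀ = D') (hDJ : D * J l R = J l R * D') :
    Subgroup (symplecticGroup l R) where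
  carrier := {M | ∃ N, (M : Matrix (l ⊕ l) (l ⊕ l) R) = 1 + D * N * D'}
  one_mem' := ⟨0, by simp⟩
  mul_mem' := by
    rintro M₁ M₂ ⟨A, hA⟩ ⟨B, hB⟩
    exact ⟨_, by rw [Submonoid.coe_mul, hA, hB, one_add_mul_mul_mul_one_add_mul_mul]⟩
  inv_mem' := by
    rintro M ⟨A, hA⟩
    exact ⟨_, by rw [coe_inv, hA,
      neg_J_mul_transpose_one_add_mul_mul_mul_J hD hD' hDJ]⟩

end SymplecticGroup

theorem congruence_type_subgroup_general (g : ℕ) (d : Fin g → ℕ) :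
    ∃ H : Subgroup (Matrix.symplecticGroup (Fin g) ℤ),
      ∀ M : Matrix.symplecticGroup (Fin g) ℤ,
        M ∈ H ↔
          ∃ N : Matrix (Fin g ⊕ Fin g) (Fin g ⊕ Fin g) ℤ,
            (M : Matrix (Fin g ⊕ Fin g) (Fin g ⊕ Fin g) ℤ) =
              1 + (Matrix.fromBlocks (Matrix.diagonal fun i => (d i : ℤ)) 0 0 1) * N *
                    (Matrix.fromBlocks 1 0 0 (Matrix.diagonal fun i => (d i : ℤ))) := by
  set δ : Matrix (Fin g) (Fin g) ℤ := diagonal fun i => (d i : ℤ)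
  have hD : (fromBlocks δ 0 0 (1 : Matrix (Fin g) (Fin g) ℤ))ᵀ = fromBlocks δ 0 0 1 := by
    rw [fromBlocks_transpose, diagonal_transpose, transpose_zero, transpose_one]
  have hD' : (fromBlocks (1 : Matrix (Fin g) (Fin g) ℤ) 0 0 δ)ᵀ = fromBlocks 1 0 0 δ := by
    rw [fromBlocks_transpose, diagonal_transpose, transpose_zero, transpose_one]
  exact ⟨SymplecticGroup.oneAddMulMulSubgroup hD hD' (fromBlocks_one_mul_J _), fun _ => Iff.rfl⟩

/-- The set of integral symplectic matrices of the form `1 + D·N·D'`, where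
`D = diag(δ, 1)` and `D' = diag(1, δ)` in block form, is a subgroup of `Sp_{2g}(ℤ)`. -/
theorem congruence_type_subgroup (g : ℕ) (d : Fin g → ℕ) (hd : ∀ i, 0 < d i) :
    ∃ H : Subgroup (Matrix.symplecticGroup (Fin g) ℤ),
      ∀ M : Matrix.symplecticGroup (Fin g) ℤ,
        M ∈ H ↔
          ∃ N : Matrix (Fin g ⊕ Fin g) (Fin g ⊕ Fin g) ℤ,
            (M : Matrix (Fin g ⊕ Fin g) (Fin g ⊕ Fin g) ℤ) =
              1 + (Matrix.fromBlocks (Matrix.diagonal fun i => (d i : ℤ)) 0 0 1) * N *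
                    (Matrix.fromBlocks 1 0 0 (Matrix.diagonal fun i => (d i : ℤ))) :=
  congruence_type_subgroup_general g d
end
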